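/- For the m-chained form on ℝ^{km+1} (m ≥ 2), the characteristic distribution of G^i equals C^i = span{∂/∂z^{k-i+1}, …, ∂/∂z^k} for each 1 ≤ i ≤ k−2 (spanned by all ∂/∂z^j_ℓ with k−i+1 ≤ j ≤ k, 1 ≤ ℓ ≤ m). -/

import Mathlib

/-- Lie bracket of vector fields on `ι → ℝ`: `[X, Y] = DY·X − DX·Y`. -/
noncomputable def bracket {ι : Type} [Fintype ι] [DecidableEq ι]
    (X Y : (ι → ℝ) → (ι → ℝ)) : (ι → ℝ) → (ι → ℝ) :=
  fun x => fderiv ℝ Y x (X x) - fderiv ℝ X x (Y x)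

/-- The C∞(X)-module of vector fields generated by a set `S` of vector fields. -/
inductive SmoothSpan {ι : Type} [Fintype ι] [DecidableEq ι]
    (S : Set ((ι → ℝ) → (ι → ℝ))) : ((ι → ℝ) → (ι → ℝ)) → Prop
  | of {f : (ι → ℝ) → (ι → ℝ)} (hf : f ∈ S) : SmoothSpan S f
  | zero : SmoothSpan S (fun _ _ => 0)
  | add {f g : (ι → ℝ) → (ι → ℝ)} : SmoothSpan S f → SmoothSpan S g →
      SmoothSpan S (fun x => f x + g x)
  | smul (h : (ι → ℝ) → ℝ) (hh : ContDiff ℝ (⊤ : ℕ∞) h) {f : (ι → ℝ) → (ι → ℝ)} :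
      SmoothSpan S f → SmoothSpan S (fun x i => h x * f x i)

/-- The span, over smooth functions, of a set of vector fields. -/
noncomputable def smoothSpan {ι : Type} [Fintype ι] [DecidableEq ι]
    (S : Set ((ι → ℝ) → (ι → ℝ))) : Set ((ι → ℝ) → (ι → ℝ)) :=
  {f | SmoothSpan S f}

/-- The derived flag: `G⁰ = span S`, `G^{i+1} = G^i + [G^i, G^i]`. -/
noncomputable def derivedFlag {ι : Type} [Fintype ι] [DecidableEq ι]
    (S : Set ((ι → ℝ) → (ι → ℝ))) : ℕ → Set ((ι → ℝ) → (ι → ℝ))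
  | 0 => smoothSpan S
  | i+1 => smoothSpan (derivedFlag S i ∪
      {h | ∃ X ∈ derivedFlag S i, ∃ Y ∈ derivedFlag S i, h = bracket X Y})

/-- The pointwise evaluation of a distribution: the subspace of `ι → ℝ` spanned
by the values at `x` of the vector fields in `D`. -/
noncomputable def ptSpan {ι : Type} [Fintype ι] [DecidableEq ι]
    (D : Set ((ι → ℝ) → (ι → ℝ))) (x : ι → ℝ) : Submodule ℝ (ι → ℝ) :=
  Submodule.span ℝ {v | ∃ f ∈ D, f x = v}

/-- The characteristic distribution `C = {c ∈ D : [c, D] ⊆ D}`. -/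
noncomputable def charDist {ι : Type} [Fintype ι] [DecidableEq ι]
    (D : Set ((ι → ℝ) → (ι → ℝ))) : Set ((ι → ℝ) → (ι → ℝ)) :=
  {c | c ∈ D ∧ ∀ f ∈ D, bracket c f ∈ D}

/-- `g₀ = ∂/∂z₀ + Σ_{i=1}^{k-1} z_{i+1} ∂/∂z_i` on `ℝ^{k+1}`. -/
noncomputable def g0 (k : ℕ) : (Fin (k+1) → ℝ) → (Fin (k+1) → ℝ) :=
  fun x i => if i.val = 0 then 1 else if h : i.val < k then x ⟨i.val + 1, by omega⟩ else 0

/-- `g₁ = ∂/∂z_k` on `ℝ^{k+1}`. -/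
noncomputable def g1 (k : ℕ) : (Fin (k+1) → ℝ) → (Fin (k+1) → ℝ) :=
  fun _ i => if i.val = k then 1 else 0

/-- The coordinate vector field `∂/∂z_j` on `ℝ^{k+1}`. -/
noncomputable def eN (k j : ℕ) : (Fin (k+1) → ℝ) → (Fin (k+1) → ℝ) :=
  fun _ i => if i.val = j then 1 else 0

/-- Coordinate index set for `ℝ^{km+1}`: `none` is `z₀`, `some (j, i)` is `z^{j+1}_{i+1}`. -/
abbrev MIdx (k m : ℕ) := Option (Fin k × Fin m)

/-- `g₀ = ∂/∂z₀ + Σ_{j=1}^{m} Σ_{i=1}^{k-1} z^{i+1}_j ∂/∂z^i_j` on `ℝ^{km+1}`. -/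
noncomputable def g0m (k m : ℕ) : (MIdx k m → ℝ) → (MIdx k m → ℝ) :=
  fun x i =>
    match i with
    | none => 1
    | some (j, l) => if h : j.val + 1 < k then x (some (⟨j.val + 1, h⟩, l)) else 0

/-- `g_l = ∂/∂z^k_l` on `ℝ^{km+1}`. -/
noncomputable def gm (k m : ℕ) (l : Fin m) : (MIdx k m → ℝ) → (MIdx k m → ℝ) :=
  fun _ i =>
    match i with
    | none => 0
    | some (j, r) => if j.val = k - 1 ∧ r = l then 1 else 0

/-- The coordinate vector field `∂/∂z^{j+1}_{l+1}` on `ℝ^{km+1}`. -/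
noncomputable def eM (k m : ℕ) (j : Fin k) (l : Fin m) : (MIdx k m → ℝ) → (MIdx k m → ℝ) :=
  fun _ i => if i = some (j, l) then 1 else 0

/-- The set of controlled vector fields `{g₀, g₁, …, g_m}` of the `m`-chained form. -/
noncomputable def GsetM (k m : ℕ) : Set ((MIdx k m → ℝ) → (MIdx k m → ℝ)) :=
  {g0m k m} ∪ {f | ∃ l : Fin m, f = gm k m l}

section General
variable {ι : Type} [Fintype ι] [DecidableEq ι]
variable {S T C : Set ((ι → ℝ) → (ι → ℝ))} {f g X Y : (ι → ℝ) → (ι → ℝ)}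

lemma SmoothSpan.congr (h : SmoothSpan S f) (hfg : f = g) : SmoothSpan S g := hfg ▸ h

lemma SmoothSpan.bind (h : SmoothSpan S f) (hST : ∀ g ∈ S, SmoothSpan T g) :
    SmoothSpan T f := by
  induction h with
  | of hf => exact hST _ hf
  | zero => exact .zero
  | add _ _ ih1 ih2 => exact .add ih1 ih2
  | smul h hh _ ih => exact .smul h hh ih

lemma SmoothSpan.mono (hST : S ⊆ T) (h : SmoothSpan S f) : SmoothSpan T f :=
  h.bind fun _ hg => .of (hST hg)

lemma SmoothSpan.smooth (hS : ∀ g ∈ S, ContDiff ℝ (⊤ : ℕ∞) g) (h : SmoothSpan S f) :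
    ContDiff ℝ (⊤ : ℕ∞) f := by
  induction h with
  | of hf => exact hS _ hf
  | zero => exact contDiff_const
  | add _ _ ih1 ih2 => exact ih1.add ih2
  | smul h hh _ ih =>
      exact contDiff_pi.mpr fun i => hh.mul ((contDiff_apply ℝ ℝ i).comp ih)

lemma SmoothSpan.neg (h : SmoothSpan S f) : SmoothSpan S (fun x => -(f x)) := by
  have := SmoothSpan.smul (fun _ => (-1 : ℝ)) contDiff_const h
  exact this.congr (by funext x i; simp)

lemma SmoothSpan.finsum {α : Type*} (s : Finset α) (F : α → ((ι → ℝ) → (ι → ℝ)))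
    (h : ∀ p ∈ s, SmoothSpan S (F p)) :
    SmoothSpan S (fun x i => ∑ p ∈ s, F p x i) := by
  classical
  induction s using Finset.induction_on with
  | empty => exact SmoothSpan.zero.congr (by funext x i; simp)
  | insert a s hni ih =>
      have := SmoothSpan.add (h a (Finset.mem_insert_self a s))
        (ih fun p hp => h p (Finset.mem_insert_of_mem hp))
      exact this.congr (by funext x i; simp [Finset.sum_insert hni])

lemma bracket_antisymm : bracket X Y = fun x => -(bracket Y X x) := by
  funext x; simp [bracket]

end General
section Bracket
variable {ι : Type} [Fintype ι] [DecidableEq ι]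
variable {A B C : Set ((ι → ℝ) → (ι → ℝ))} {X Y : (ι → ℝ) → (ι → ℝ)}

lemma smul_eq_pi (h : (ι → ℝ) → ℝ) (f : (ι → ℝ) → (ι → ℝ)) :
    (fun x i => h x * f x i) = fun x => h x • f x := by
  funext x i; simp [Pi.smul_apply]

lemma bracket_span_gen
    (hA : ∀ g ∈ A, ContDiff ℝ (⊤ : ℕ∞) g) (hB : ∀ g ∈ B, ContDiff ℝ (⊤ : ℕ∞) g)
    (hAC : ∀ g ∈ A, SmoothSpan C g) (hBC : ∀ g ∈ B, SmoothSpan C g)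
    (hbr : ∀ a ∈ A, ∀ b ∈ B, SmoothSpan C (bracket a b))
    (a : (ι → ℝ) → (ι → ℝ)) (ha : a ∈ A) (hY : SmoothSpan B Y) :
    SmoothSpan C (bracket a Y) := by
  have hasm : ContDiff ℝ (⊤ : ℕ∞) a := hA a ha
  induction hY with
  | of hf => exact hbr a ha _ hf
  | zero =>
      refine SmoothSpan.zero.congr ?_
      funext x
      show (0:ι → ℝ) = fderiv ℝ (fun _ _ => (0:ℝ)) x (a x) - fderiv ℝ a x (fun _ => 0)
      rw [show (fun _ => (0:ℝ)) = (0:ι→ℝ) from rfl, map_zero, fderiv_const_apply]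
      simp
  | @add f g hf hg ihf ihg =>
      have hfd : Differentiable ℝ f := (hf.smooth hB).differentiable (by simp)
      have hgd : Differentiable ℝ g := (hg.smooth hB).differentiable (by simp)
      refine (SmoothSpan.add ihf ihg).congr ?_
      funext x
      show bracket a f x + bracket a g x = _
      simp only [bracket, fderiv_fun_add (hfd x) (hgd x)]
      simp only [ContinuousLinearMap.add_apply, map_add]
      abel
  | @smul h hh f hf ihf =>
      have hfd : Differentiable ℝ f := (hf.smooth hB).differentiable (by simp)
      have hhd : Differentiable ℝ h := hh.differentiable (by simp)
      have hfh : ContDiff ℝ (⊤ : ℕ∞) (fun x => fderiv ℝ h x (a x)) :=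
        (hh.fderiv_right (by simp)).clm_apply hasm
      have hmem : SmoothSpan C (fun x i =>
          h x * bracket a f x i + (fderiv ℝ h x (a x)) * f x i) := by
        refine SmoothSpan.add (.smul h hh ihf) (.smul _ hfh (hf.bind hBC))
      refine hmem.congr ?_
      funext x
      rw [smul_eq_pi h f]
      show _ = bracket a (fun x => h x • f x) x
      simp only [bracket, fderiv_fun_smul (hhd x) (hfd x)]
      funext i
      simp only [ContinuousLinearMap.add_apply, ContinuousLinearMap.smul_apply,
        ContinuousLinearMap.smulRight_apply, map_smul, Pi.add_apply, Pi.sub_apply,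
        Pi.smul_apply, smul_eq_mul]
      ring

lemma bracket_span
    (hA : ∀ g ∈ A, ContDiff ℝ (⊤ : ℕ∞) g) (hB : ∀ g ∈ B, ContDiff ℝ (⊤ : ℕ∞) g)
    (hAC : ∀ g ∈ A, SmoothSpan C g) (hBC : ∀ g ∈ B, SmoothSpan C g)
    (hbr : ∀ a ∈ A, ∀ b ∈ B, SmoothSpan C (bracket a b))
    (hX : SmoothSpan A X) (hY : SmoothSpan B Y) :
    SmoothSpan C (bracket X Y) := by
  have hYsm : ContDiff ℝ (⊤ : ℕ∞) Y := hY.smooth hB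
  have hYd : Differentiable ℝ Y := hYsm.differentiable (by simp)
  induction hX with
  | of hf => exact bracket_span_gen hA hB hAC hBC hbr _ hf hY
  | zero =>
      refine SmoothSpan.zero.congr ?_
      funext x
      show (0:ι → ℝ) = fderiv ℝ Y x (fun _ => 0) - fderiv ℝ (fun _ _ => (0:ℝ)) x (Y x)
      rw [show (fun _ => (0:ℝ)) = (0:ι→ℝ) from rfl, map_zero, fderiv_const_apply]
      simp
  | @add f g hf hg ihf ihg =>
      have hfd : Differentiable ℝ f := (hf.smooth hA).differentiable (by simp)
      have hgd : Differentiable ℝ g := (hg.smooth hA).differentiable (by simp)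
      refine (SmoothSpan.add ihf ihg).congr ?_
      funext x
      show bracket f Y x + bracket g Y x = _
      simp only [bracket, fderiv_fun_add (hfd x) (hgd x)]
      simp only [ContinuousLinearMap.add_apply, map_add]
      abel
  | @smul h hh f hf ihf =>
      have hfd : Differentiable ℝ f := (hf.smooth hA).differentiable (by simp)
      have hhd : Differentiable ℝ h := hh.differentiable (by simp)
      have hfh : ContDiff ℝ (⊤ : ℕ∞) (fun x => fderiv ℝ h x (Y x)) :=
        (hh.fderiv_right (by simp)).clm_apply hYsm
      have hmem : SmoothSpan C (fun x i =>
          h x * bracket f Y x i + (-(fderiv ℝ h x (Y x))) * f x i) :=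
        SmoothSpan.add (.smul h hh ihf) (.smul _ hfh.neg (hf.bind hAC))
      refine hmem.congr ?_
      funext x
      rw [smul_eq_pi h f]
      show _ = bracket (fun x => h x • f x) Y x
      simp only [bracket, fderiv_fun_smul (hhd x) (hfd x)]
      funext i
      simp only [ContinuousLinearMap.add_apply, ContinuousLinearMap.smul_apply,
        ContinuousLinearMap.smulRight_apply, map_smul, Pi.add_apply, Pi.sub_apply,
        Pi.smul_apply, smul_eq_mul]
      ring

end Bracket
section Concrete
variable (k m : ℕ)

/-- The linear part of `g0m`. -/
noncomputable def Lm : (MIdx k m → ℝ) →L[ℝ] (MIdx k m → ℝ) :=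
  ContinuousLinearMap.pi fun idx =>
    match idx with
    | none => 0
    | some (j, l) =>
        if h : j.val + 1 < k then ContinuousLinearMap.proj (R := ℝ) (some (⟨j.val + 1, h⟩, l))
        else 0

lemma Lm_apply_none (v : MIdx k m → ℝ) : Lm k m v none = 0 := rfl

lemma Lm_apply_some (v : MIdx k m → ℝ) (j : Fin k) (l : Fin m) :
    Lm k m v (some (j, l)) =
      if h : j.val + 1 < k then v (some (⟨j.val + 1, h⟩, l)) else 0 := by
  rw [Lm, ContinuousLinearMap.pi_apply]
  by_cases h : j.val + 1 < k <;> simp [h]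

lemma g0m_eq : g0m k m = fun x => (g0m k m 0) + Lm k m x := by
  funext x idx
  match idx with
  | none => simp [g0m, Lm_apply_none]
  | some (j, l) =>
      simp only [g0m, Pi.add_apply, Lm_apply_some]
      by_cases h : j.val + 1 < k <;> simp [h]

lemma hasFDerivAt_g0m (x : MIdx k m → ℝ) : HasFDerivAt (g0m k m) (Lm k m) x := by
  rw [g0m_eq]
  simpa using (ContinuousLinearMap.hasFDerivAt (f := Lm k m) (x := x)).const_add (g0m k m 0)

lemma fderiv_g0m (x : MIdx k m → ℝ) : fderiv ℝ (g0m k m) x = Lm k m :=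
  (hasFDerivAt_g0m k m x).fderiv

lemma contDiff_g0m : ContDiff ℝ (⊤ : ℕ∞) (g0m k m) := by
  rw [g0m_eq]; exact contDiff_const.add (Lm k m).contDiff

lemma contDiff_eM (j : Fin k) (l : Fin m) : ContDiff ℝ (⊤ : ℕ∞) (eM k m j l) := contDiff_const

lemma fderiv_eM (j : Fin k) (l : Fin m) (x : MIdx k m → ℝ) :
    fderiv ℝ (eM k m j l) x = 0 := fderiv_const_apply _

lemma gm_eq_eM (hk : 1 ≤ k) (l : Fin m) : gm k m l = eM k m ⟨k - 1, by omega⟩ l := by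
  funext x idx
  match idx with
  | none => simp [gm, eM]
  | some (j, r) =>
      simp only [gm, eM, Option.some.injEq, Prod.mk.injEq]
      congr 1
      simp only [eq_iff_iff]
      constructor
      · rintro ⟨h1, h2⟩; exact ⟨Fin.ext h1, h2⟩
      · rintro ⟨h1, h2⟩; exact ⟨congrArg Fin.val h1, h2⟩

lemma bracket_eM_g0m (j : Fin k) (l : Fin m) (hj : 1 ≤ j.val) :
    bracket (eM k m j l) (g0m k m) = eM k m ⟨j.val - 1, by omega⟩ l := by
  funext x idx
  simp only [bracket, fderiv_g0m, fderiv_eM, ContinuousLinearMap.zero_apply,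
    Pi.sub_apply, Pi.zero_apply, sub_zero]
  match idx with
  | none => simp [Lm_apply_none, eM]
  | some (j', r) =>
      rw [Lm_apply_some]
      by_cases h : j'.val + 1 < k
      · simp only [h, dif_pos, eM]
        by_cases he : j'.val + 1 = j.val ∧ r = l
        · have h1 : (some (⟨j'.val + 1, h⟩, r) : MIdx k m) = some (j, l) := by
            simp only [Option.some.injEq, Prod.mk.injEq]
            exact ⟨Fin.ext he.1, he.2⟩
          have h2 : (some (j', r) : MIdx k m) = some (⟨j.val - 1, by omega⟩, l) := by
            simp only [Option.some.injEq, Prod.mk.injEq]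
            obtain ⟨he1, he2⟩ := he
            exact ⟨Fin.ext (show j'.val = j.val - 1 by omega), he2⟩
          rw [h1, h2]; simp
        · have h1 : (some (⟨j'.val + 1, h⟩, r) : MIdx k m) ≠ some (j, l) := by
            intro hc; apply he
            obtain ⟨h1, h2⟩ := Prod.mk.injEq .. ▸ Option.some.injEq .. ▸ hc
            exact ⟨by rw [← h1], h2⟩
          have h2 : (some (j', r) : MIdx k m) ≠ some (⟨j.val - 1, by omega⟩, l) := by
            intro hc; apply h1
            simp only [Option.some.injEq, Prod.mk.injEq] at hc ⊢
            obtain ⟨hc1, hc2⟩ := hc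
            have hv : j'.val = j.val - 1 := congrArg Fin.val hc1
            exact ⟨Fin.ext (show j'.val + 1 = j.val by omega), hc2⟩
          simp [h1, h2]
      · -- j'.val + 1 = k, so j'.val = k - 1 ≠ j.val - 1 unless... j.val ≤ k-1 so j.val - 1 < k - 1
        simp only [h, dif_neg, eM]
        have : (some (j', r) : MIdx k m) ≠ some (⟨j.val - 1, by omega⟩, l) := by
          intro hc
          simp only [Option.some.injEq, Prod.mk.injEq] at hc
          have hv : j'.val = j.val - 1 := congrArg Fin.val hc.1
          have := j.isLt
          omega
        simp [this]

lemma bracket_self {ι : Type} [Fintype ι] [DecidableEq ι] (X : (ι → ℝ) → (ι → ℝ)) :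
    bracket X X = fun _ _ => 0 := by
  funext x
  show fderiv ℝ X x (X x) - fderiv ℝ X x (X x) = _
  rw [sub_self]; rfl

lemma bracket_eM_eM (j j' : Fin k) (l l' : Fin m) :
    bracket (eM k m j l) (eM k m j' l') = fun _ _ => 0 := by
  funext x idx
  simp [bracket, fderiv_eM]

end Concrete
section Flag
variable (k m : ℕ)

/-- Generators of `G^n`: `g0m` together with `∂/∂z^{j+1}_l` for `j ≥ k-1-n`. -/
def Tset (n : ℕ) : Set ((MIdx k m → ℝ) → (MIdx k m → ℝ)) :=
  {g0m k m} ∪ {f | ∃ j : Fin k, ∃ l : Fin m, k - 1 - n ≤ j.val ∧ f = eM k m j l}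

lemma Tset_smooth (n : ℕ) : ∀ g ∈ Tset k m n, ContDiff ℝ (⊤ : ℕ∞) g := by
  rintro g (rfl | ⟨j, l, hj, rfl⟩)
  · exact contDiff_g0m k m
  · exact contDiff_eM k m j l

lemma Tset_mono {n n' : ℕ} (h : n ≤ n') : Tset k m n ⊆ Tset k m n' := by
  rintro g (rfl | ⟨j, l, hj, rfl⟩)
  · exact Or.inl rfl
  · exact Or.inr ⟨j, l, by omega, rfl⟩

lemma derivedFlag_mono {ι : Type} [Fintype ι] [DecidableEq ι]
    {S : Set ((ι → ℝ) → (ι → ℝ))} {n n' : ℕ} (h : n ≤ n') :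
    derivedFlag S n ⊆ derivedFlag S n' := by
  induction n' with
  | zero =>
      have : n = 0 := by omega
      subst this; exact fun _ h => h
  | succ n' ih =>
      rcases Nat.lt_or_ge n (n'+1) with h' | h'
      · intro g hg
        exact SmoothSpan.of (Or.inl (ih (by omega) hg))
      · have : n = n' + 1 := by omega
        subst this; exact fun _ h => h

lemma derivedFlag_span_closed {ι : Type} [Fintype ι] [DecidableEq ι]
    {S : Set ((ι → ℝ) → (ι → ℝ))} {n : ℕ} {f : (ι → ℝ) → (ι → ℝ)}
    (h : SmoothSpan (derivedFlag S n) f) : f ∈ derivedFlag S n := by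
  match n with
  | 0 => exact h.bind fun g hg => hg
  | n+1 => exact h.bind fun g hg => hg

lemma g0m_mem (n : ℕ) : g0m k m ∈ derivedFlag (GsetM k m) n :=
  derivedFlag_mono (Nat.zero_le n) (SmoothSpan.of (Or.inl rfl))

lemma eM_mem (hk : 1 ≤ k) (n : ℕ) (j : Fin k) (l : Fin m) (hj : k - 1 - n ≤ j.val) :
    eM k m j l ∈ derivedFlag (GsetM k m) n := by
  induction n generalizing j with
  | zero =>
      have hjv : j = ⟨k - 1, by omega⟩ := Fin.ext (by simp; omega)
      rw [hjv]
      exact SmoothSpan.of (Or.inr ⟨l, (gm_eq_eM k m hk l).symm⟩)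
  | succ n ih =>
      rcases Nat.lt_or_ge j.val (k - 1 - n) with h' | h'
      swap
      · exact derivedFlag_mono (Nat.le_succ n) (ih j h')
      · -- j.val + 1 ≥ k - 1 - n and j.val + 1 < k
        have h1 : j.val + 1 < k := by omega
        set j' : Fin k := ⟨j.val + 1, h1⟩ with hj'
        have hmem : eM k m j' l ∈ derivedFlag (GsetM k m) n := ih j' (by simp [hj']; omega)
        have hbr : bracket (eM k m j' l) (g0m k m) = eM k m j l := by
          rw [bracket_eM_g0m k m j' l (by simp [hj'])]
          congr 1
        refine SmoothSpan.of (Or.inr ⟨_, hmem, _, g0m_mem k m n, ?_⟩) |>.congr hbr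
        rfl

lemma flag_eq (hk : 3 ≤ k) (n : ℕ) (hn : n ≤ k - 2) :
    derivedFlag (GsetM k m) n = smoothSpan (Tset k m n) := by
  apply Set.Subset.antisymm
  · -- by induction on n
    induction n with
    | zero =>
        intro c hc
        refine SmoothSpan.bind hc ?_
        rintro g (rfl | ⟨l, rfl⟩)
        · exact SmoothSpan.of (Or.inl rfl)
        · exact (SmoothSpan.of (Or.inr ⟨⟨k-1, by omega⟩, l, by simp, rfl⟩)).congr
            (gm_eq_eM k m (by omega) l).symm
    | succ n ih =>
        intro c hc
        refine SmoothSpan.bind hc ?_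
        rintro g (hg | ⟨X, hX, Y, hY, rfl⟩)
        · exact (ih (by omega) hg).mono (Tset_mono k m (Nat.le_succ n))
        · have hX' : SmoothSpan (Tset k m n) X := ih (by omega) hX
          have hY' : SmoothSpan (Tset k m n) Y := ih (by omega) hY
          refine bracket_span (Tset_smooth k m n) (Tset_smooth k m n)
            (fun g hg => SmoothSpan.of (Tset_mono k m (Nat.le_succ n) hg))
            (fun g hg => SmoothSpan.of (Tset_mono k m (Nat.le_succ n) hg))
            ?_ hX' hY'
          rintro a (rfl | ⟨j, l, hj, rfl⟩) b (rfl | ⟨j', l', hj', rfl⟩)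
          · exact SmoothSpan.zero.congr (bracket_self _).symm
          · -- [g0m, eM] = -eM (j'-1)
            have hj1 : 1 ≤ j'.val := by omega
            refine (SmoothSpan.of (f := eM k m ⟨j'.val - 1, by omega⟩ l')
              (Or.inr ⟨_, l', by simp; omega, rfl⟩)).neg.congr ?_
            rw [bracket_antisymm (X := g0m k m), bracket_eM_g0m k m j' l' hj1]
          · -- [eM, g0m] = eM (j-1)
            have hj1 : 1 ≤ j.val := by omega
            refine (SmoothSpan.of (f := eM k m ⟨j.val - 1, by omega⟩ l)
              (Or.inr ⟨_, l, by simp; omega, rfl⟩)).congr ?_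
            rw [bracket_eM_g0m k m j l hj1]
          · exact SmoothSpan.zero.congr (bracket_eM_eM k m j j' l l').symm
  · intro c hc
    exact derivedFlag_span_closed
      (hc.bind fun g hg => SmoothSpan.of (by
        rcases hg with rfl | ⟨j, l, hj, rfl⟩
        · exact g0m_mem k m n
        · exact eM_mem k m (by omega) n j l hj))

end Flag
section Invariant

lemma fderiv_apply_idx {ι : Type} [Fintype ι] [DecidableEq ι]
    {c : (ι → ℝ) → (ι → ℝ)} {x : ι → ℝ} (hc : DifferentiableAt ℝ c x)
    (v : ι → ℝ) (idx : ι) :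
    fderiv ℝ c x v idx = fderiv ℝ (fun y => c y idx) x v := by
  have h : ∀ i, DifferentiableAt ℝ (fun y => c y i) x := fun i =>
    ((ContinuousLinearMap.proj (R := ℝ) (φ := fun _ : ι => ℝ)
      i).differentiable.differentiableAt).comp x hc
  rw [fderiv_pi h]
  rfl

lemma fderiv_eval {ι : Type} [Fintype ι] [DecidableEq ι] (x v : ι → ℝ) (idx : ι) :
    fderiv ℝ (fun y : ι → ℝ => y idx) x v = v idx := by
  have : (fun y : ι → ℝ => y idx) =
      (ContinuousLinearMap.proj (R := ℝ) (φ := fun _ : ι => ℝ) idx) := rfl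
  rw [this, ContinuousLinearMap.fderiv]
  rfl

/-- The key pointwise invariant of `G^n`: low components are proportional
to the `z₀`-component, with ratio given by the chained form. -/
lemma invariant (k m n : ℕ) {c : (MIdx k m → ℝ) → (MIdx k m → ℝ)}
    (hc : SmoothSpan (Tset k m n) c) (x : MIdx k m → ℝ) (j : Fin k) (l : Fin m)
    (hj : j.val < k - 1 - n) (h1 : j.val + 1 < k) :
    c x (some (j, l)) = c x none * x (some (⟨j.val + 1, h1⟩, l)) := by
  induction hc with
  | of hf =>
      rcases hf with rfl | ⟨j', l', hj', rfl⟩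
      · simp [g0m, h1]
      · have hne : (some (j, l) : MIdx k m) ≠ some (j', l') := by
          intro hcon
          simp only [Option.some.injEq, Prod.mk.injEq] at hcon
          have := congrArg Fin.val hcon.1
          omega
        simp [eM, hne]
  | zero => simp
  | add hf hg ihf ihg => simp only [Pi.add_apply]; rw [ihf, ihg]; ring
  | smul h hh hf ihf => simp only []; rw [ihf]; ring

end Invariant

set_option maxHeartbeats 2000000 in
/-- For the `m`-chained form on `ℝ^{km+1}` (`m ≥ 2`), the
characteristic distribution of `G^i` equals `C^i = span{∂/∂z^{k-i+1}, …, ∂/∂z^k}`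
for each `1 ≤ i ≤ k−2`. -/
theorem m_chained_characteristic_distribution (k m : ℕ) (hk : 3 ≤ k) (hm : 2 ≤ m)
    (i : ℕ) (hi1 : 1 ≤ i) (hi2 : i ≤ k - 2) :
    charDist (derivedFlag (GsetM k m) i) =
      smoothSpan {f | ∃ j : Fin k, ∃ l : Fin m, k - i ≤ j.val ∧ f = eM k m j l} := by
  classical
  set U : Set ((MIdx k m → ℝ) → (MIdx k m → ℝ)) :=
    {f | ∃ j : Fin k, ∃ l : Fin m, k - i ≤ j.val ∧ f = eM k m j l} with hU
  have hUsm : ∀ g ∈ U, ContDiff ℝ (⊤ : ℕ∞) g := by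
    rintro g ⟨j, l, hj, rfl⟩; exact contDiff_eM k m j l
  have hUT : U ⊆ Tset k m i := by
    rintro g ⟨j, l, hj, rfl⟩; exact Or.inr ⟨j, l, by omega, rfl⟩
  rw [flag_eq k m hk i hi2]
  apply Set.Subset.antisymm
  · rintro c ⟨hc1, hc2⟩
    have hc1 : SmoothSpan (Tset k m i) c := hc1
    have hcsm : ContDiff ℝ (⊤ : ℕ∞) c := hc1.smooth (Tset_smooth k m i)
    have hcd : Differentiable ℝ c := hcsm.differentiable (by simp)
    have hcomp : ∀ idx, Differentiable ℝ (fun y => c y idx) := fun idx x =>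
      ((ContinuousLinearMap.proj (R := ℝ) (φ := fun _ : MIdx k m => ℝ)
        idx).differentiable.differentiableAt).comp x (hcd x)
    set jb : Fin k := ⟨k - 1 - i, by omega⟩ with hjb
    set jc : Fin k := ⟨k - 2 - i, by omega⟩ with hjc
    have hjclt : jc.val < k - 1 - i := by simp [hjc]; omega
    have hjc1 : jc.val + 1 < k := by simp [hjc]; omega
    have hidx : (⟨jc.val + 1, hjc1⟩ : Fin k) = jb := Fin.ext (by simp [hjb, hjc]; omega)
    -- Claim 1: the z₀-component of c vanishes
    have a0 : ∀ x, c x none = 0 := by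
      intro x
      set l0 : Fin m := ⟨0, by omega⟩ with hl0
      have hfT : eM k m jb l0 ∈ Tset k m i := Or.inr ⟨jb, l0, by simp [hjb], rfl⟩
      have hbr : SmoothSpan (Tset k m i) (bracket c (eM k m jb l0)) :=
        hc2 _ (SmoothSpan.of hfT)
      set e : MIdx k m → ℝ := eM k m jb l0 x with he
      set idx1 : MIdx k m := some (⟨jc.val + 1, hjc1⟩, l0) with hidx1
      have hbv : ∀ idx, bracket c (eM k m jb l0) x idx =
          -(fderiv ℝ (fun y => c y idx) x e) := by
        intro idx
        show (fderiv ℝ (eM k m jb l0) x (c x) - fderiv ℝ c x (eM k m jb l0 x)) idx = _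
        rw [fderiv_eM]
        simp only [ContinuousLinearMap.zero_apply, Pi.sub_apply, Pi.zero_apply, zero_sub,
          Pi.neg_apply]
        rw [fderiv_apply_idx (hcd x)]
      have hinv := invariant k m i hbr x jc l0 hjclt hjc1
      have hA : DifferentiableAt ℝ (fun y => c y none) x := hcomp none x
      have hB : DifferentiableAt ℝ (fun y : MIdx k m → ℝ => y idx1) x :=
        (ContinuousLinearMap.proj (R := ℝ) (φ := fun _ : MIdx k m => ℝ)
          idx1).differentiable.differentiableAt
      have hcompeq : (fun y => c y (some (jc, l0))) = (fun y => c y none * y idx1) :=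
        funext fun y => invariant k m i hc1 y jc l0 hjclt hjc1
      have he1 : e idx1 = 1 := by
        rw [he, hidx1, hidx]; simp [eM]
      have hprod : fderiv ℝ (fun y => c y (some (jc, l0))) x e
          = c x none * e idx1 + x idx1 * fderiv ℝ (fun y => c y none) x e := by
        rw [hcompeq, fderiv_fun_mul hA hB]
        simp [fderiv_eval, ContinuousLinearMap.add_apply, ContinuousLinearMap.smul_apply]
      rw [hbv (some (jc, l0)), hbv none, hprod, he1] at hinv
      linear_combination -hinv
    have hanull : (fun y => c y none) = fun _ => (0 : ℝ) := funext a0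
    -- Claim 2: the components at level k-1-i vanish
    have b0 : ∀ x (l : Fin m), c x (some (jb, l)) = 0 := by
      intro x l
      have hbr : SmoothSpan (Tset k m i) (bracket c (g0m k m)) :=
        hc2 _ (SmoothSpan.of (Or.inl rfl))
      have hbv : ∀ idx, bracket c (g0m k m) x idx =
          Lm k m (c x) idx - fderiv ℝ (fun y => c y idx) x (g0m k m x) := by
        intro idx
        show (fderiv ℝ (g0m k m) x (c x) - fderiv ℝ c x (g0m k m x)) idx = _
        rw [fderiv_g0m]
        show Lm k m (c x) idx - fderiv ℝ c x (g0m k m x) idx = _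
        rw [fderiv_apply_idx (hcd x)]
      have hinv := invariant k m i hbr x jc l hjclt hjc1
      rw [hbv (some (jc, l)), hbv none] at hinv
      have hz : (fun y => c y (some (jc, l))) = fun _ => (0 : ℝ) := by
        funext y
        rw [invariant k m i hc1 y jc l hjclt hjc1, a0 y, zero_mul]
      rw [hz, hanull, Lm_apply_none, fderiv_const_apply, Lm_apply_some] at hinv
      simp only [hjc1, dif_pos, ContinuousLinearMap.zero_apply, sub_zero, zero_sub,
        neg_zero, zero_mul] at hinv
      rw [← hidx]
      exact hinv
    -- Claim 3: all components below level k-i vanish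
    have small : ∀ x (q : Fin k × Fin m), q.1.val < k - i → c x (some q) = 0 := by
      intro x q hq
      rcases Nat.lt_or_ge q.1.val (k - 1 - i) with hlt | hge
      · have h1 : q.1.val + 1 < k := by omega
        have := invariant k m i hc1 x q.1 q.2 hlt h1
        rw [a0 x, zero_mul] at this
        exact this
      · have : q.1 = jb := Fin.ext (by simp [hjb]; omega)
        have hq2 : (q.1, q.2) = (jb, q.2) := by rw [this]
        calc c x (some q) = c x (some (jb, q.2)) := by rw [← hq2]
          _ = 0 := b0 x q.2
    -- assemble c as a smooth combination of the high coordinate fields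
    set s : Finset (Fin k × Fin m) := Finset.univ.filter (fun p => k - i ≤ p.1.val) with hs
    have hterm : ∀ p ∈ s, SmoothSpan U (fun x idx => c x (some p) * eM k m p.1 p.2 x idx) := by
      intro p hp
      have hp' : k - i ≤ p.1.val := (Finset.mem_filter.mp hp).2
      exact SmoothSpan.smul _ ((contDiff_apply ℝ ℝ (some p)).comp hcsm)
        (SmoothSpan.of ⟨p.1, p.2, hp', rfl⟩)
    have hmem := SmoothSpan.finsum (S := U) s _ hterm
    refine hmem.congr ?_
    funext x idx
    match idx with
    | none =>
        have hall : ∀ p ∈ s, c x (some p) * eM k m p.1 p.2 x none = 0 := by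
          intro p _; simp [eM]
        rw [Finset.sum_congr rfl hall, Finset.sum_const_zero, a0 x]
    | some q =>
        have hrw : ∀ p ∈ s, c x (some p) * eM k m p.1 p.2 x (some q) =
            if p = q then c x (some p) else 0 := by
          intro p _
          by_cases hpq : p = q
          · subst hpq; simp [eM]
          · have hne : (some q : MIdx k m) ≠ some (p.1, p.2) := by
              simpa using fun h => hpq (by rw [← h])
            simp [eM, hne, hpq]
        rw [Finset.sum_congr rfl hrw, Finset.sum_ite_eq' s q (fun p => c x (some p))]
        by_cases hqs : q ∈ s
        · simp [hqs]
        · have hq1 : q.1.val < k - i := by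
            by_contra hcon
            exact hqs (Finset.mem_filter.mpr ⟨Finset.mem_univ q, by omega⟩)
          rw [if_neg hqs, small x q hq1]
  · intro c hc
    have hc : SmoothSpan U c := hc
    refine ⟨hc.mono hUT, ?_⟩
    intro f hf
    refine bracket_span hUsm (Tset_smooth k m i) (fun g hg => SmoothSpan.of (hUT hg))
      (fun g hg => SmoothSpan.of hg) ?_ hc hf
    rintro a ⟨j, l, hj, rfl⟩ b (rfl | ⟨j', l', hj', rfl⟩)
    · have hj1 : 1 ≤ j.val := by omega
      refine (SmoothSpan.of (f := eM k m ⟨j.val - 1, by omega⟩ l)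
        (Or.inr ⟨_, l, by simp; omega, rfl⟩)).congr ?_
      rw [bracket_eM_g0m k m j l hj1]
    · exact SmoothSpan.zero.congr (bracket_eM_eM k m j j' l l').symm
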